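/- arXiv:1412.0130 — 9 statements merged into one kernel-verified Lean document; each statement's English description precedes it below -/
import Mathlib

section
/- For every m ≥ 4, the join K_m + \overline{K_{m-1}} of a complete graph on m vertices with an edgeless graph on m−1 vertices does not contain the square of a Hamiltonian cycle. -/
/-!
Along the cycle of an `H²`, any two vertices at distance one or two are adjacent, so the positions
`P` of an independent set satisfy that `P`, `P + 1` and `P + 2` are pairwise disjoint, forcing
`3 |P| ≤ n`. In `K_m + \overline{K_{m-1}}` the `m - 1` vertices of the edgeless part are
independent among `2m - 1` vertices, and `3 (m - 1) ≤ 2m - 1` fails once `m ≥ 3`.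
-/

/-- `G` contains the square of a Hamiltonian cycle: there is a cyclic ordering of
all vertices such that consecutive vertices and vertices at distance two on the
cycle are adjacent in `G`. -/
def HasH2 {V : Type*} [Fintype V] (G : SimpleGraph V) : Prop :=
  ∃ e : ZMod (Fintype.card V) ≃ V,
    ∀ i : ZMod (Fintype.card V), G.Adj (e i) (e (i + 1)) ∧ G.Adj (e i) (e (i + 2))

/-- The join of  with the edgeless graph on  vertices. -/
def joinKmEmpty (m : ℕ) : SimpleGraph (Fin m ⊕ Fin (m - 1)) :=
  SimpleGraph.fromRel (fun a _ => a.isLeft = true)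

open Finset

theorem Finset.three_mul_card_le_of_add_notMem {G : Type*} [AddGroup G] [Fintype G]
    [DecidableEq G] (s : Finset G) (a : G) (h₁ : ∀ x ∈ s, x + a ∉ s)
    (h₂ : ∀ x ∈ s, x + a + a ∉ s) : 3 * #s ≤ Fintype.card G := by
  have hdisj₁ : Disjoint s (s.image (· + a)) := by
    simp only [disjoint_left, mem_image, not_exists, not_and]
    rintro _ hx y hy rfl
    exact h₁ y hy hx
  have hdisj₂ : Disjoint (s ∪ s.image (· + a)) (s.image (· + a + a)) := by
    simp only [disjoint_left, mem_union, mem_image, not_exists, not_and]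
    rintro _ (hx | ⟨y, hy, rfl⟩) z hz hzy
    · exact h₂ z hz (hzy ▸ hx)
    · exact h₁ z hz (add_right_cancel hzy ▸ hy)
  calc 3 * #s = #(s ∪ s.image (· + a) ∪ s.image (· + a + a)) := by
        rw [card_union_of_disjoint hdisj₂, card_union_of_disjoint hdisj₁,
          card_image_of_injective _ (add_left_injective a),
          card_image_of_injective _ fun x y h ↦ by simpa using h]
        ring
    _ ≤ Fintype.card G := card_le_univ _

theorem HasH2.three_mul_card_le_of_isIndepSet {V : Type*} [Fintype V] {G : SimpleGraph V}
    (hG : HasH2 G) {s : Finset V} (hs : G.IsIndepSet s) : 3 * #s ≤ Fintype.card V := by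
  classical
  obtain ⟨e, he⟩ := hG
  obtain rfl | ⟨v, -⟩ := s.eq_empty_or_nonempty
  · simp
  have : Nonempty V := ⟨v⟩
  have not_adj {x y : V} (hx : x ∈ s) (hy : y ∈ s) (hxy : G.Adj x y) : False :=
    hs hx hy hxy.ne hxy
  have key := (s.map e.symm.toEmbedding).three_mul_card_le_of_add_notMem 1
    (fun i hi hi₁ ↦ ?_) (fun i hi hi₂ ↦ ?_)
  · simpa only [card_map, ZMod.card] using key
  · simp only [mem_map_equiv, Equiv.symm_symm] at hi hi₁
    exact not_adj hi hi₁ (he i).1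
  · simp only [mem_map_equiv, Equiv.symm_symm, add_assoc, one_add_one_eq_two] at hi hi₂
    exact not_adj hi hi₂ (he i).2

theorem joinKmEmpty_isIndepSet_range_inr (m : ℕ) :
    (joinKmEmpty m).IsIndepSet (Set.range Sum.inr) := by
  rintro _ ⟨a, rfl⟩ _ ⟨b, rfl⟩ -
  simp [joinKmEmpty]

/-- For m >= 4, the join of K_m and the empty graph on m-1 vertices has no
Hamiltonian square. -/
theorem joinKmEmpty_no_h2 (m : ℕ) (hm : 4 ≤ m) : ¬HasH2 (joinKmEmpty m) := by
  intro h
  have hindep : (joinKmEmpty m).IsIndepSet (univ.map .inr : Finset (Fin m ⊕ Fin (m - 1))) := by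
    simpa using joinKmEmpty_isIndepSet_range_inr m
  have hcard := h.three_mul_card_le_of_isIndepSet hindep
  simp only [card_map, card_univ, Fintype.card_fin, Fintype.card_sum] at hcard
  omega
end

section
/- For every m ≥ 4, the graph obtained from two disjoint copies of K_m by adding a perfect matching between them does not contain the square of a Hamiltonian cycle. -/
/-- Two disjoint copies of `K_m` joined by a perfect matching `aᵢbᵢ`. -/
def twoKmMatching (m : ℕ) : SimpleGraph (Fin m ⊕ Fin m) :=
  SimpleGraph.fromRel (fun a b =>
    match a, b with
    | Sum.inl _, Sum.inl _ => True
    | Sum.inr _, Sum.inr _ => True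
    | Sum.inl i, Sum.inr j => i = j
    | Sum.inr _, Sum.inl _ => False)

variable {V α : Type*}

def SimpleGraph.AtMostOneCrossNeighbor (G : SimpleGraph V) (f : V → α) : Prop :=
  ∀ ⦃u v w⦄, G.Adj u v → G.Adj u w → f v ≠ f u → f w ≠ f u → v = w

lemma SimpleGraph.AtMostOneCrossNeighbor.eq_of_triangle {G : SimpleGraph V} {f : V → α}
    (hf : G.AtMostOneCrossNeighbor f) {u v w : V} (huv : G.Adj u v) (huw : G.Adj u w)
    (hvw : G.Adj v w) : f u = f v := by
  by_contra hne
  by_cases hwu : f w = f u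
  · exact huw.ne (hf huv.symm hvw hne (hwu.trans_ne hne))
  · exact hvw.ne (hf huv huw (Ne.symm hne) hwu)

lemma Function.Periodic.apply_eq_apply_zero {n : ℕ} {g : ZMod n → α} (hg : Function.Periodic g 1)
    (i : ZMod n) : g i = g 0 := by
  obtain ⟨k, rfl⟩ := ZMod.intCast_surjective i
  simpa using hg.int_mul k 0

lemma HasH2.nonempty [Fintype V] {G : SimpleGraph V} (h : HasH2 G) : Nonempty V :=
  let ⟨e, _⟩ := h; ⟨e 0⟩

lemma HasH2.eq_of_atMostOneCrossNeighbor [Fintype V] {G : SimpleGraph V} {f : V → α}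
    (h : HasH2 G) (hf : G.AtMostOneCrossNeighbor f) (u v : V) : f u = f v := by
  obtain ⟨e, he⟩ := h
  have hstep : Function.Periodic (f ∘ e) 1 := fun i => by
    have hnext := (he (i + 1)).1
    rw [add_assoc, one_add_one_eq_two] at hnext
    exact (hf.eq_of_triangle (he i).1 (he i).2 hnext).symm
  rw [← e.apply_symm_apply u, ← e.apply_symm_apply v]
  exact (hstep.apply_eq_apply_zero _).trans (hstep.apply_eq_apply_zero _).symm

lemma twoKmMatching_atMostOneCrossNeighbor (m : ℕ) :
    (twoKmMatching m).AtMostOneCrossNeighbor Sum.isLeft := by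
  rintro (a | a) (b | b) (c | c) <;> simp_all [twoKmMatching]

theorem twoKmMatching_no_h2_general (m : ℕ) : ¬HasH2 (twoKmMatching m) := by
  intro h
  obtain ⟨j | j⟩ := h.nonempty <;>
    simpa using h.eq_of_atMostOneCrossNeighbor (twoKmMatching_atMostOneCrossNeighbor m)
      (Sum.inl j) (Sum.inr j)

/-- For m >= 4, two copies of K_m joined by a perfect matching have no
Hamiltonian square. -/
theorem twoKmMatching_no_h2 (m : ℕ) (hm : 4 ≤ m) : ¬HasH2 (twoKmMatching m) :=
  twoKmMatching_no_h2_general m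
end

section
/- Let G be a connected Z₁-free graph. If some vertex v of G has degree at least 3 and lies in a triangle, then G is a complete multipartite graph. -/
/-- `F` occurs as an induced subgraph of `G`. -/
def ContainsInduced {W V : Type*} (F : SimpleGraph W) (G : SimpleGraph V) : Prop :=
  ∃ f : W ↪ V, ∀ a b, F.Adj a b ↔ G.Adj (f a) (f b)

/-- `Z₁`: the triangle with a pendant edge (claw plus an edge between two leaves). -/
def Z1Graph : SimpleGraph (Fin 4) :=
  SimpleGraph.fromRel (fun a b => (a, b) ∈ ([(0,1),(0,2),(1,2),(2,3)] : List (Fin 4 × Fin 4)))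

/-- Complete multipartite graph: the relation "equal or non-adjacent" is
transitive (its classes are the parts). -/
def IsCompleteMultipartite {V : Type*} (G : SimpleGraph V) : Prop :=
  ∀ ⦃x y z : V⦄, ¬G.Adj x y → ¬G.Adj y z → x ≠ z → ¬G.Adj x z

/-!
Fix a triangle `T = {a, b, c}`. Excluding an induced `Z₁` means that a neighbour of one vertex of
a triangle is adjacent to one of its other two vertices. Hence a vertex adjacent to `T` is
adjacent to two vertices `x, y` of `T`, and then every neighbour of it is adjacent to `T`
(apply this to the triangle it forms with `x, y`); by connectedness every vertex is adjacent
to `T`. Now suppose `r` is adjacent to neither end of an edge `pq`, and let `x, y ∈ T` be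
neighbours of `r`. Applied to the triangle `rxy`, `Z₁`-freeness forces `p` and `q` to be
adjacent to both `x` and `y`, and applied to the triangle `pqx` with the pendant vertex `r` it
gives a contradiction.
-/

namespace SimpleGraph

variable {V : Type*} {G : SimpleGraph V}

theorem adj_or_adj_of_adj_triangle (hz1 : ¬ContainsInduced Z1Graph G) {a b c d : V}
    (hab : G.Adj a b) (hac : G.Adj a c) (hbc : G.Adj b c) (hdc : G.Adj d c)
    (hda : d ≠ a) (hdb : d ≠ b) : G.Adj d a ∨ G.Adj d b := by
  by_contra! ⟨hda', hdb'⟩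
  have hinj : Function.Injective ![a, b, c, d] := by
    intro i j hij
    fin_cases i <;> fin_cases j <;> simp_all [hab.ne, hac.ne, hbc.ne, hdc.ne]
  refine hz1 ⟨⟨![a, b, c, d], hinj⟩, fun i j => ?_⟩
  fin_cases i <;> fin_cases j <;>
    simp [Z1Graph, hab, hac, hbc, hdc, hab.symm, hac.symm, hbc.symm, hdc.symm, hda', hdb',
      G.adj_comm a d, G.adj_comm b d]

theorem IsClique.adj_or_adj_of_adj (hz1 : ¬ContainsInduced Z1Graph G) {T : Set V}
    (hT : G.IsClique T) {t u x y : V} (ht : t ∈ T) (hx : x ∈ T) (hy : y ∈ T) (hxy : x ≠ y)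
    (hu : G.Adj u t) : G.Adj u x ∨ G.Adj u y := by
  rcases eq_or_ne t x with rfl | htx
  · exact .inl hu
  rcases eq_or_ne t y with rfl | hty
  · exact .inr hu
  rcases eq_or_ne u x with rfl | hux
  · exact .inr (hT hx hy hxy)
  rcases eq_or_ne u y with rfl | huy
  · exact .inl (hT hy hx hxy.symm)
  exact adj_or_adj_of_adj_triangle hz1 (hT hx hy hxy) (hT hx ht htx.symm) (hT hy ht hty.symm)
    hu hux huy

theorem adj_of_adj_of_not_adj (hz1 : ¬ContainsInduced Z1Graph G) {a b r s : V}
    (hab : G.Adj a b) (hra : G.Adj r a) (hrb : G.Adj r b) (hsa : G.Adj s a)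
    (hsr : ¬G.Adj s r) (hne : s ≠ r) : G.Adj s b := by
  have hsb : s ≠ b := by rintro rfl; exact hsr hrb.symm
  exact (adj_or_adj_of_adj_triangle hz1 hrb hra hab.symm hsa hne hsb).resolve_left hsr

theorem isClique_triple {a b c : V} (hab : G.Adj a b) (hac : G.Adj a c) (hbc : G.Adj b c) :
    G.IsClique {a, b, c} := by
  simp [isClique_insert, hab, hac, hbc]

theorem exists_adj_adj_of_adj_triangle (hz1 : ¬ContainsInduced Z1Graph G) {a b c t u : V}
    (hab : G.Adj a b) (hac : G.Adj a c) (hbc : G.Adj b c) (ht : t ∈ ({a, b, c} : Set V))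
    (hu : G.Adj u t) :
    ∃ x ∈ ({a, b, c} : Set V), ∃ y ∈ ({a, b, c} : Set V), x ≠ y ∧ G.Adj u x ∧ G.Adj u y := by
  have hT := isClique_triple hab hac hbc
  rcases ht with rfl | rfl | rfl
  · rcases hT.adj_or_adj_of_adj hz1 (by simp) (by simp : b ∈ _) (by simp : c ∈ _) hbc.ne hu
      with h | h
    exacts [⟨t, by simp, b, by simp, hab.ne, hu, h⟩, ⟨t, by simp, c, by simp, hac.ne, hu, h⟩]
  · rcases hT.adj_or_adj_of_adj hz1 (by simp) (by simp : a ∈ _) (by simp : c ∈ _) hac.ne hu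
      with h | h
    exacts [⟨a, by simp, t, by simp, hab.ne, h, hu⟩, ⟨t, by simp, c, by simp, hbc.ne, hu, h⟩]
  · rcases hT.adj_or_adj_of_adj hz1 (by simp) (by simp : a ∈ _) (by simp : b ∈ _) hab.ne hu
      with h | h
    exacts [⟨a, by simp, t, by simp, hac.ne, h, hu⟩, ⟨b, by simp, t, by simp, hbc.ne, h, hu⟩]

theorem exists_adj_triangle_of_adj (hz1 : ¬ContainsInduced Z1Graph G) {a b c t u v : V}
    (hab : G.Adj a b) (hac : G.Adj a c) (hbc : G.Adj b c) (ht : t ∈ ({a, b, c} : Set V))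
    (hvt : G.Adj v t) (huv : G.Adj u v) : ∃ t ∈ ({a, b, c} : Set V), G.Adj u t := by
  have hT := isClique_triple hab hac hbc
  obtain ⟨x, hx, y, hy, hxy, hvx, hvy⟩ := exists_adj_adj_of_adj_triangle hz1 hab hac hbc ht hvt
  rcases eq_or_ne u x with rfl | hux
  · exact ⟨y, hy, hT hx hy hxy⟩
  rcases eq_or_ne u y with rfl | huy
  · exact ⟨x, hx, hT hy hx hxy.symm⟩
  rcases adj_or_adj_of_adj_triangle hz1 (hT hx hy hxy) hvx.symm hvy.symm huv hux huy with h | h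
  exacts [⟨x, hx, h⟩, ⟨y, hy, h⟩]

theorem Connected.exists_adj_triangle (hz1 : ¬ContainsInduced Z1Graph G) (hconn : G.Connected)
    {a b c : V} (hab : G.Adj a b) (hac : G.Adj a c) (hbc : G.Adj b c) (u : V) :
    ∃ t ∈ ({a, b, c} : Set V), G.Adj u t := by
  obtain ⟨w⟩ := hconn.preconnected u a
  induction w with
  | nil => exact ⟨b, by simp, hab⟩
  | cons huv _ ih =>
    obtain ⟨t, ht, hvt⟩ := ih hab hac
    exact exists_adj_triangle_of_adj hz1 hab hac hbc ht hvt huv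

theorem isCompleteMultipartite_of_forall_exists_adj_triangle
    (hz1 : ¬ContainsInduced Z1Graph G) {a b c : V} (hab : G.Adj a b) (hac : G.Adj a c)
    (hbc : G.Adj b c) (hdom : ∀ u, ∃ t ∈ ({a, b, c} : Set V), G.Adj u t) :
    G.IsCompleteMultipartite := by
  refine ⟨fun p r q hpr hrq hpq => ?_⟩
  have hT := isClique_triple hab hac hbc
  obtain ⟨t, ht, hrt⟩ := hdom r
  obtain ⟨x, hx, y, hy, hxy, hrx, hry⟩ := exists_adj_adj_of_adj_triangle hz1 hab hac hbc ht hrt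
  have hboth : ∀ s, ¬G.Adj s r → s ≠ r → G.Adj s x ∧ G.Adj s y := by
    intro s hsr hne
    obtain ⟨t', ht', hst'⟩ := hdom s
    rcases hT.adj_or_adj_of_adj hz1 ht' hx hy hxy hst' with h | h
    · exact ⟨h, adj_of_adj_of_not_adj hz1 (hT hx hy hxy) hrx hry h hsr hne⟩
    · exact ⟨adj_of_adj_of_not_adj hz1 (hT hy hx hxy.symm) hry hrx h hsr hne, h⟩
  have hpr' : p ≠ r := by rintro rfl; exact hrq hpq
  have hqr : q ≠ r := by rintro rfl; exact hpr hpq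
  have hp := hboth p hpr hpr'
  have hq := hboth q (fun h => hrq h.symm) hqr
  rcases adj_or_adj_of_adj_triangle hz1 hpq hp.1 hq.1 hrx hpr'.symm hqr.symm with h | h
  exacts [hpr h.symm, hrq h]

end SimpleGraph

theorem z1free_completeMultipartite_general {V : Type*} (G : SimpleGraph V)
    (hconn : G.Connected) (hz1 : ¬ContainsInduced Z1Graph G)
    (v : V)
    (htri : ∃ x y, G.Adj v x ∧ G.Adj v y ∧ G.Adj x y) :
    IsCompleteMultipartite G := by
  obtain ⟨x, y, hvx, hvy, hxy⟩ := htri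
  have hG := SimpleGraph.isCompleteMultipartite_of_forall_exists_adj_triangle hz1 hvx hvy hxy
    (hconn.exists_adj_triangle hz1 hvx hvy hxy)
  exact fun _ _ _ h₁ h₂ _ => hG.trans _ _ _ h₁ h₂

/-- A connected Z1-free graph having a vertex of degree at least 3 lying in a
triangle is complete multipartite. -/
theorem z1free_completeMultipartite {V : Type*} (G : SimpleGraph V)
    (hconn : G.Connected) (hz1 : ¬ContainsInduced Z1Graph G)
    (v : V) (hdeg : 3 ≤ (G.neighborSet v).ncard)
    (htri : ∃ x y, G.Adj v x ∧ G.Adj v y ∧ G.Adj x y) :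
    IsCompleteMultipartite G :=
  z1free_completeMultipartite_general G hconn hz1 v htri
end

section
/- Let G be a connected Z₁-free graph and v a vertex of G lying in a triangle with deg(v) ≥ 3. Then every vertex w not in the closed neighborhood N[v] satisfies N(w) = N(v). -/
/-!
Fix a triangle `vxy`. Z₁-freeness forbids a vertex adjacent to exactly one corner of a triangle
outside it. Hence a vertex at distance two from `v` is adjacent to both `x` and `y`, and two
non-adjacent vertices sharing the edge `xy` have the same neighbourhood (each neighbour of one
would otherwise be a pendant of a triangle through the other). So the set of vertices that lie in
`N[v]` or have neighbourhood `N(v)` is closed under adjacency, and connectivity finishes.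
-/

namespace SimpleGraph

variable {V : Type*} {G : SimpleGraph V}

theorem Preconnected.induction_on_adj (hG : G.Preconnected) {P : V → Prop}
    (hP : ∀ ⦃a b⦄, G.Adj a b → P a → P b) {v : V} (hv : P v) (w : V) : P w := by
  induction (reachable_iff_reflTransGen v w).1 (hG v w) with
  | refl => exact hv
  | tail _ hbc ih => exact hP hbc ih

theorem containsInduced_z1Graph {a b c d : V} (hab : G.Adj a b) (hac : G.Adj a c)
    (hbc : G.Adj b c) (hcd : G.Adj c d) (had : ¬G.Adj a d) (hbd : ¬G.Adj b d)
    (hda : d ≠ a) (hdb : d ≠ b) : ContainsInduced Z1Graph G := by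
  have hinj : Function.Injective ![a, b, c, d] := by
    intro i j hij
    fin_cases i <;> fin_cases j <;>
      simp_all [hab.ne, hac.ne, hbc.ne, hcd.ne, hab.ne.symm, hac.ne.symm, hbc.ne.symm,
        hcd.ne.symm, hda.symm, hdb.symm]
  have hda' : ¬G.Adj d a := fun h => had h.symm
  have hdb' : ¬G.Adj d b := fun h => hbd h.symm
  refine ⟨⟨![a, b, c, d], hinj⟩, fun i j => ?_⟩
  fin_cases i <;> fin_cases j <;>
    simp [Z1Graph, hab, hac, hbc, hcd, hab.symm, hac.symm, hbc.symm, hcd.symm, had, hbd, hda',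
      hdb']

theorem adj_or_adj_of_triangle_adj (hz1 : ¬ContainsInduced Z1Graph G) {a b c d : V}
    (hab : G.Adj a b) (hac : G.Adj a c) (hbc : G.Adj b c) (hcd : G.Adj c d) (hda : d ≠ a)
    (hdb : d ≠ b) : G.Adj a d ∨ G.Adj b d := by
  by_contra! h
  exact hz1 (containsInduced_z1Graph hab hac hbc hcd h.1 h.2 hda hdb)

theorem adj_of_triangle_of_adj_of_not_adj (hz1 : ¬ContainsInduced Z1Graph G) {a s t u : V}
    (has : G.Adj a s) (hat : G.Adj a t) (hst : G.Adj s t) (hus : G.Adj u s) (hua : u ≠ a)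
    (hau : ¬G.Adj a u) : G.Adj u t :=
  ((adj_or_adj_of_triangle_adj hz1 hat has hst.symm hus.symm hua
    (by rintro rfl; exact hau hat)).resolve_left hau).symm

theorem eq_or_adj_of_triangle_adj (hz1 : ¬ContainsInduced Z1Graph G) {a x y t : V}
    (hax : G.Adj a x) (hay : G.Adj a y) (hxy : G.Adj x y) (hat : G.Adj a t) :
    t = x ∨ G.Adj x t ∨ t = y ∨ G.Adj y t := by
  by_cases htx : t = x
  · exact .inl htx
  by_cases hty : t = y
  · exact .inr (.inr (.inl hty))
  rcases adj_or_adj_of_triangle_adj hz1 hxy hax.symm hay.symm hat htx hty with hxt | hyt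
  · exact .inr (.inl hxt)
  · exact .inr (.inr (.inr hyt))

theorem neighborSet_subset_of_adj_of_adj (hz1 : ¬ContainsInduced Z1Graph G)
    {a b x y : V} (hxy : G.Adj x y) (hax : G.Adj a x) (hay : G.Adj a y) (hbx : G.Adj b x)
    (hby : G.Adj b y) (hba : b ≠ a) (hab : ¬G.Adj a b) :
    G.neighborSet a ⊆ G.neighborSet b := by
  intro t hat
  rcases eq_or_adj_of_triangle_adj hz1 hax hay hxy hat with rfl | hxt | rfl | hyt
  · exact hbx
  · exact adj_of_triangle_of_adj_of_not_adj hz1 hax hat hxt hbx hba hab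
  · exact hby
  · exact adj_of_triangle_of_adj_of_not_adj hz1 hay hat hyt hby hba hab

theorem neighborSet_eq_of_adj_of_adj (hz1 : ¬ContainsInduced Z1Graph G)
    {a b x y : V} (hxy : G.Adj x y) (hax : G.Adj a x) (hay : G.Adj a y) (hbx : G.Adj b x)
    (hby : G.Adj b y) (hab : ¬G.Adj a b) :
    G.neighborSet a = G.neighborSet b := by
  obtain rfl | hba := eq_or_ne b a
  · rfl
  exact (neighborSet_subset_of_adj_of_adj hz1 hxy hax hay hbx hby hba hab).antisymm
    (neighborSet_subset_of_adj_of_adj hz1 hxy hbx hby hax hay hba.symm fun h => hab h.symm)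

theorem adj_and_adj_of_adj_neighbor (hz1 : ¬ContainsInduced Z1Graph G) {v x y u s : V}
    (hvx : G.Adj v x) (hvy : G.Adj v y) (hxy : G.Adj x y) (hvs : G.Adj v s) (hus : G.Adj u s)
    (huv : u ≠ v) (hvu : ¬G.Adj v u) :
    G.Adj u x ∧ G.Adj u y := by
  have hx_of_y : G.Adj u y → G.Adj u x :=
    fun huy => adj_of_triangle_of_adj_of_not_adj hz1 hvy hvx hxy.symm huy huv hvu
  have hy_of_x : G.Adj u x → G.Adj u y :=
    fun hux => adj_of_triangle_of_adj_of_not_adj hz1 hvx hvy hxy hux huv hvu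
  have hxy_or : G.Adj u x ∨ G.Adj u y := by
    rcases eq_or_adj_of_triangle_adj hz1 hvx hvy hxy hvs with rfl | hxs | rfl | hys
    · exact .inl hus
    · exact .inl (adj_of_triangle_of_adj_of_not_adj hz1 hvs hvx hxs.symm hus huv hvu)
    · exact .inr hus
    · exact .inr (adj_of_triangle_of_adj_of_not_adj hz1 hvs hvy hys.symm hus huv hvu)
  rcases hxy_or with hux | huy
  · exact ⟨hux, hy_of_x hux⟩
  · exact ⟨hx_of_y huy, huy⟩

end SimpleGraph

theorem z1free_outside_closed_neighborhood_general {V : Type*} (G : SimpleGraph V)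
    (hconn : G.Connected) (hz1 : ¬ContainsInduced Z1Graph G)
    (v : V)
    (htri : ∃ x y, G.Adj v x ∧ G.Adj v y ∧ G.Adj x y) :
    ∀ w : V, w ∉ ({v} ∪ G.neighborSet v : Set V) → G.neighborSet w = G.neighborSet v := by
  obtain ⟨x, y, hvx, hvy, hxy⟩ := htri
  have hclosed : ∀ ⦃p q⦄, G.Adj p q →
      (p = v ∨ G.Adj v p ∨ G.neighborSet p = G.neighborSet v) →
      q = v ∨ G.Adj v q ∨ G.neighborSet q = G.neighborSet v := by
    intro p q hpq hp
    by_cases hqv : q = v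
    · exact .inl hqv
    by_cases hvq : G.Adj v q
    · exact .inr (.inl hvq)
    refine .inr (.inr ?_)
    rcases hp with rfl | hvp | hp
    · exact absurd hpq hvq
    · obtain ⟨hqx, hqy⟩ :=
        SimpleGraph.adj_and_adj_of_adj_neighbor hz1 hvx hvy hxy hvp hpq.symm hqv hvq
      exact SimpleGraph.neighborSet_eq_of_adj_of_adj hz1 hxy hqx hqy hvx hvy fun h => hvq h.symm
    · exact absurd (hp ▸ hpq : q ∈ G.neighborSet v) hvq
  intro w hw
  simp only [Set.mem_union, Set.mem_singleton_iff, SimpleGraph.mem_neighborSet, not_or] at hw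
  rcases hconn.preconnected.induction_on_adj hclosed (.inl rfl) w with hwv | hvw | hw'
  exacts [absurd hwv hw.1, absurd hvw hw.2, hw']

/-- In a connected Z1-free graph, if v has degree at least 3 and lies in a
triangle, then every vertex outside the closed neighborhood of  has the same
neighborhood as . -/
theorem z1free_outside_closed_neighborhood {V : Type*} (G : SimpleGraph V)
    (hconn : G.Connected) (hz1 : ¬ContainsInduced Z1Graph G)
    (v : V) (hdeg : 3 ≤ (G.neighborSet v).ncard)
    (htri : ∃ x y, G.Adj v x ∧ G.Adj v y ∧ G.Adj x y) :
    ∀ w : V, w ∉ ({v} ∪ G.neighborSet v : Set V) → G.neighborSet w = G.neighborSet v :=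
  z1free_outside_closed_neighborhood_general G hconn hz1 v htri
end

section
/- Let r ≥ 3 and let G be a connected graph that is Z₁-free and K_{1,r}-free and contains a vertex of degree at least r. Then G is a complete multipartite graph K_{t₁,…,t_k} with each part of size at most r−1. -/
/-- The star `K_{1,r}` with center `0` and `r` leaves. -/
def starGraph (r : ℕ) : SimpleGraph (Fin (r + 1)) :=
  SimpleGraph.fromRel (fun a _ => a = 0)

/-!
If some vertex has at least `r` neighbours, two of them are adjacent (no induced `K_{1,r}`), so
that vertex lies on a triangle. In a `Z₁`-free graph a vertex adjacent to a triangle vertex is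
adjacent to a second vertex of that triangle; hence, by connectedness, every vertex lies on a
triangle and every edge lies on a triangle. From this, `Z₁`-freeness shows that the vertices
non-adjacent to both ends of an edge form a set closed under adjacency, which by connectedness
must be empty: non-adjacency is transitive, i.e. `G` is complete multipartite. Finally a part
is an independent set joined to any neighbour of its vertices, so it has fewer than `r` vertices.
-/

section

variable {V : Type*} {G : SimpleGraph V}

lemma SimpleGraph.Connected.forall_of_adj_imp (hG : G.Connected) {P : V → Prop}
    (hP : ∀ ⦃u w⦄, G.Adj u w → P u → P w) {a : V} (ha : P a) (b : V) : P b := by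
  induction (G.reachable_iff_reflTransGen a b).1 (hG a b) with
  | refl => exact ha
  | tail _ hadj ih => exact hP hadj ih

lemma Set.exists_injective_fin_of_le_ncard {S : Set V} {r : ℕ} (h : r ≤ S.ncard) :
    ∃ f : Fin r → V, Function.Injective f ∧ ∀ i, f i ∈ S := by
  rcases S.finite_or_infinite with hS | hS
  · have := hS.to_subtype
    let e : S ≃ Fin S.ncard := Finite.equivFinOfCardEq (Nat.card_coe_set_eq S)
    exact ⟨fun i => e.symm (Fin.castLE h i),
      Subtype.val_injective.comp (e.symm.injective.comp (Fin.castLE_injective h)),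
      fun i => (e.symm _).2⟩
  · exact ⟨fun i => hS.natEmbedding S i,
      Subtype.val_injective.comp ((hS.natEmbedding S).injective.comp Fin.val_injective),
      fun i => (hS.natEmbedding S i).2⟩

lemma containsInduced_starGraph {r : ℕ} {c : V} {S : Set V} (hSc : S ⊆ G.neighborSet c)
    (hS : G.IsIndepSet S) (hr : r ≤ S.ncard) : ContainsInduced (starGraph r) G := by
  obtain ⟨f, hf, hfS⟩ := Set.exists_injective_fin_of_le_ncard hr
  have hcf : ∀ i, G.Adj c (f i) := fun i => hSc (hfS i)
  have hff : ∀ i j, ¬G.Adj (f i) (f j) := fun i j hij => hS (hfS i) (hfS j) hij.ne hij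
  have hemb : Function.Injective (Fin.cons c f : Fin (r + 1) → V) :=
    Fin.cons_injective_iff.2 ⟨fun ⟨i, hi⟩ => (hcf i).ne hi.symm, hf⟩
  refine ⟨⟨_, hemb⟩, fun a b => ?_⟩
  induction a using Fin.cases <;> induction b using Fin.cases <;>
    simp [starGraph, Fin.succ_ne_zero, (Fin.succ_ne_zero _).symm, hcf, (hcf _).symm, hff]

lemma adj_or_adj_of_z1Free (hz1 : ¬ContainsInduced Z1Graph G) {a b c d : V}
    (hab : G.Adj a b) (hac : G.Adj a c) (hbc : G.Adj b c) (hcd : G.Adj c d)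
    (hda : d ≠ a) (hdb : d ≠ b) : G.Adj d a ∨ G.Adj d b := by
  by_contra! h
  have hinj : Function.Injective ![a, b, c, d] := by
    intro i j hij
    fin_cases i <;> fin_cases j <;> simp_all [G.ne_of_adj]
  refine hz1 ⟨⟨_, hinj⟩, fun i j => ?_⟩
  fin_cases i <;> fin_cases j <;>
    simp [Z1Graph, hab, hac, hbc, hcd, h, hab.symm, hac.symm, hbc.symm, hcd.symm, G.adj_comm _ d]

def OnTriangle (G : SimpleGraph V) (v : V) : Prop :=
  ∃ a b, G.Adj v a ∧ G.Adj v b ∧ G.Adj a b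

lemma onTriangle_of_starFree {r : ℕ} {v : V} (hstar : ¬ContainsInduced (starGraph r) G)
    (hv : r ≤ (G.neighborSet v).ncard) : OnTriangle G v := by
  by_contra h
  exact hstar <| containsInduced_starGraph subset_rfl
    (fun a ha b hb _ hab => h ⟨a, b, ha, hb, hab⟩) hv

lemma ncard_not_adj_le_of_starFree {r : ℕ} {u v : V} (hcm : IsCompleteMultipartite G)
    (hstar : ¬ContainsInduced (starGraph r) G) (hvu : G.Adj v u) :
    {w | ¬G.Adj v w}.ncard ≤ r - 1 := by
  suffices ¬r ≤ {w | ¬G.Adj v w}.ncard by omega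
  refine fun hr => hstar (containsInduced_starGraph (c := u) (fun w hw => ?_) ?_ hr)
  · by_contra huw
    exact hcm hw (fun h => huw h.symm) hvu.ne hvu
  · exact fun a ha b hb hab => hcm (fun h => ha h.symm) hb hab

section Z1Free

variable (hz1 : ¬ContainsInduced Z1Graph G)
include hz1

lemma OnTriangle.exists_adj_adj {v w : V} (hv : OnTriangle G v) (hvw : G.Adj v w) :
    ∃ t, G.Adj v t ∧ G.Adj w t := by
  obtain ⟨a, b, hva, hvb, hab⟩ := hv
  rcases eq_or_ne w a with rfl | hwa
  · exact ⟨b, hvb, hab⟩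
  rcases eq_or_ne w b with rfl | hwb
  · exact ⟨a, hva, hab.symm⟩
  rcases adj_or_adj_of_z1Free hz1 hab hva.symm hvb.symm hvw hwa hwb with hwa' | hwb'
  · exact ⟨a, hva, hwa'⟩
  · exact ⟨b, hvb, hwb'⟩

lemma OnTriangle.of_adj {v w : V} (hv : OnTriangle G v) (hvw : G.Adj v w) : OnTriangle G w :=
  let ⟨t, hvt, hwt⟩ := hv.exists_adj_adj hz1 hvw
  ⟨v, t, hvw.symm, hwt, hvt⟩

lemma not_adj_of_adj_of_not_adj (htri : ∀ v, OnTriangle G v) {x z u w : V} (hxz : G.Adj x z)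
    (huw : G.Adj u w) (hux : ¬G.Adj u x) (huz : ¬G.Adj u z) : ¬G.Adj w x := by
  intro hwx
  have hux' : u ≠ x := by rintro rfl; exact huz hxz
  have huz' : u ≠ z := by rintro rfl; exact hux hxz.symm
  have hZ1 : ∀ {a b c}, G.Adj a b → G.Adj a c → G.Adj b c → G.Adj c u → u ≠ a → u ≠ b →
      G.Adj u a ∨ G.Adj u b := adj_or_adj_of_z1Free hz1
  by_cases hwz : G.Adj w z
  · exact (hZ1 hxz hwx.symm hwz.symm huw.symm hux' huz').elim hux huz
  -- Put the edge `xw` on a triangle `xwt`: first `z`, then `u` must be adjacent to `t`,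
  -- and then `u` hangs off the triangle `xzt`.
  obtain ⟨t, hxt, hwt⟩ := (htri x).exists_adj_adj hz1 hwx.symm
  have hzt : G.Adj z t := by
    have hzw : z ≠ w := by rintro rfl; exact huz huw
    have hzt : z ≠ t := by rintro rfl; exact hwz hwt
    exact (adj_or_adj_of_z1Free hz1 hwt hwx hxt.symm hxz hzw hzt).resolve_left
      fun h => hwz h.symm
  have hut : G.Adj u t := by
    have hut : u ≠ t := by rintro rfl; exact huz hzt.symm
    exact (hZ1 hxt hwx.symm hwt.symm huw.symm hux' hut).resolve_left hux
  exact (hZ1 hxz hxt hzt hut.symm hux' huz').elim hux huz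

lemma isCompleteMultipartite_of_forall_onTriangle (hconn : G.Connected)
    (htri : ∀ v, OnTriangle G v) : IsCompleteMultipartite G := by
  intro x y z hxy hyz _ hxz
  have hP := hconn.forall_of_adj_imp (P := fun w => ¬G.Adj w x ∧ ¬G.Adj w z)
    (fun _ _ huw hu => ⟨not_adj_of_adj_of_not_adj hz1 htri hxz huw hu.1 hu.2,
      not_adj_of_adj_of_not_adj hz1 htri hxz.symm huw hu.2 hu.1⟩)
    ⟨fun h => hxy h.symm, hyz⟩ x
  exact hP.2 hxz

end Z1Free

end

theorem z1_star_free_completeMultipartite_general {V : Type*} (G : SimpleGraph V) (r : ℕ)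
    (hconn : G.Connected)
    (hz1 : ¬ContainsInduced Z1Graph G)
    (hstar : ¬ContainsInduced (starGraph r) G)
    (hdeg : ∃ v : V, r ≤ (G.neighborSet v).ncard) :
    IsCompleteMultipartite G ∧ ∀ v : V, ({w : V | ¬G.Adj v w}).ncard ≤ r - 1 := by
  obtain ⟨v₀, hv₀⟩ := hdeg
  have htri : ∀ v, OnTriangle G v :=
    hconn.forall_of_adj_imp (fun _ _ h hv => hv.of_adj hz1 h) (onTriangle_of_starFree hstar hv₀)
  have hcm := isCompleteMultipartite_of_forall_onTriangle hz1 hconn htri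
  refine ⟨hcm, fun v => ?_⟩
  obtain ⟨u, -, hvu, -⟩ := htri v
  exact ncard_not_adj_le_of_starFree hcm hstar hvu

/-- A connected `{Z₁, K_{1,r}}`-free graph (r >= 3) with a vertex of degree at
least  is complete multipartite with all parts of size at most . -/
theorem z1_star_free_completeMultipartite {V : Type*} (G : SimpleGraph V) (r : ℕ) (hr : 3 ≤ r)
    (hconn : G.Connected)
    (hz1 : ¬ContainsInduced Z1Graph G)
    (hstar : ¬ContainsInduced (starGraph r) G)
    (hdeg : ∃ v : V, r ≤ (G.neighborSet v).ncard) :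
    IsCompleteMultipartite G ∧ ∀ v : V, ({w : V | ¬G.Adj v w}).ncard ≤ r - 1 :=
  z1_star_free_completeMultipartite_general G r hconn hz1 hstar hdeg
end

section
/- Let r ≥ 3 and let G be a connected {K_{1,r}, Z₁}-free graph on n vertices with a vertex of degree at least r. Then G is (n−r+1)-connected. -/
/-- A graph is `k`-connected if it has more than `k` vertices and deleting any
set of fewer than `k` vertices leaves it connected. -/
def IsKConnected {V : Type*} [Fintype V] (G : SimpleGraph V) (k : ℕ) : Prop :=
  k < Fintype.card V ∧
    ∀ S : Finset V, S.card < k → (G.induce ((S : Set V)ᶜ)).Connected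

/-!
A vertex of degree at least `r` lies in a triangle, since its neighbourhood is not independent.
In a connected `Z₁`-free graph, triangles propagate along edges, so every vertex and then every
edge lies in a triangle. Then non-adjacency is transitive: if `b` missed both ends of an edge `ac`,
walk from `a` towards `b`; `Z₁`-freeness yields a new such configuration closer to `b`. So `G` is
complete multipartite, and since `K_{1,r}`-freeness bounds its parts by `r - 1`, any `r` remaining
vertices meet at least two parts and induce a connected graph.
-/

section

variable {V : Type*} {G : SimpleGraph V}

theorem containsInduced_z1Graph {a b c d : V} (hab : G.Adj a b) (hac : G.Adj a c)
    (hbc : G.Adj b c) (hcd : G.Adj c d) (had : ¬G.Adj a d) (hbd : ¬G.Adj b d) :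
    ContainsInduced Z1Graph G := by
  have hda : d ≠ a := by rintro rfl; exact hbd hab.symm
  have hdb : d ≠ b := by rintro rfl; exact had hab
  have hinj : Function.Injective ![a, b, c, d] := by
    intro i j hij
    fin_cases i <;> fin_cases j <;> simp_all [hab.ne, hac.ne, hbc.ne, hcd.ne']
  refine ⟨⟨_, hinj⟩, fun i j => ?_⟩
  fin_cases i <;> fin_cases j <;>
    simp [Z1Graph, hab, hac, hbc, hcd, had, hbd, hab.symm, hac.symm, hbc.symm, hcd.symm,
      G.adj_comm d]

theorem containsInduced_starGraph_s11 {r : ℕ} {z : V} {s : Finset V} (hs : r ≤ s.card)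
    (hz : ∀ x ∈ s, G.Adj z x) (hind : G.IsIndepSet s) : ContainsInduced (starGraph r) G := by
  let leaves : Fin r ↪ V :=
    (Fin.castLEEmb hs).trans (s.equivFin.symm.toEmbedding.trans (Function.Embedding.subtype _))
  have hleaves (i : Fin r) : leaves i ∈ s := (s.equivFin.symm _).2
  have hz_notMem : z ∉ Set.range leaves := by
    rintro ⟨i, hi⟩
    exact G.loopless.irrefl z (hz z (hi ▸ hleaves i))
  refine ⟨Fin.Embedding.cons leaves hz_notMem, fun i j => ?_⟩
  induction i using Fin.cases <;> induction j using Fin.cases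
  · simp [starGraph]
  · simpa [starGraph, eq_comm] using hz _ (hleaves _)
  · simpa [starGraph] using (hz _ (hleaves _)).symm
  · rename_i i j
    simpa [starGraph] using
      fun h : G.Adj (leaves i) (leaves j) => hind (hleaves i) (hleaves j) h.ne h

def SimpleGraph.InTriangle (G : SimpleGraph V) (u : V) : Prop :=
  ∃ x y, G.Adj u x ∧ G.Adj u y ∧ G.Adj x y

theorem inTriangle_of_le_ncard_neighborSet [Finite V] {r : ℕ}
    (hstar : ¬ContainsInduced (starGraph r) G) {v : V} (hv : r ≤ (G.neighborSet v).ncard) :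
    G.InTriangle v := by
  by_contra hv_tri
  have hfin := (G.neighborSet v).toFinite
  refine hstar (containsInduced_starGraph_s11 (z := v) (s := hfin.toFinset)
    (by rwa [← Set.ncard_eq_toFinset_card]) (fun x hx => by simpa using hx) ?_)
  intro x hx y hy _ hxy
  exact hv_tri ⟨x, y, by simpa using hx, by simpa using hy, hxy⟩

theorem adj_or_adj_of_z1Free_s11 (hz1 : ¬ContainsInduced Z1Graph G) {a w x y : V}
    (hxy : G.Adj x y) (hax : G.Adj a x) (hay : G.Adj a y) (haw : G.Adj a w) :
    G.Adj w x ∨ G.Adj w y := by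
  by_contra! h
  exact hz1 (containsInduced_z1Graph hxy hax.symm hay.symm haw (h.1 ·.symm) (h.2 ·.symm))

theorem exists_adj_adj_of_inTriangle (hz1 : ¬ContainsInduced Z1Graph G) {a c : V}
    (ha : G.InTriangle a) (hac : G.Adj a c) : ∃ e, G.Adj a e ∧ G.Adj c e := by
  obtain ⟨x, y, hax, hay, hxy⟩ := ha
  rcases adj_or_adj_of_z1Free_s11 hz1 hxy hax hay hac with hcx | hcy
  exacts [⟨x, hax, hcx⟩, ⟨y, hay, hcy⟩]

theorem SimpleGraph.InTriangle.of_adj (hz1 : ¬ContainsInduced Z1Graph G) {a c : V}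
    (ha : G.InTriangle a) (hac : G.Adj a c) : G.InTriangle c :=
  let ⟨e, hae, hce⟩ := exists_adj_adj_of_inTriangle hz1 ha hac
  ⟨a, e, hac.symm, hce, hae⟩

theorem SimpleGraph.Connected.inTriangle (hconn : G.Connected) (hz1 : ¬ContainsInduced Z1Graph G)
    {v : V} (hv : G.InTriangle v) (u : V) : G.InTriangle u := by
  obtain ⟨p⟩ := hconn v u
  induction p with
  | nil => exact hv
  | cons h _ ih => exact ih (hv.of_adj hz1 h)

theorem SimpleGraph.Reachable.exists_adj_dist_lt {a b : V} (h : G.Reachable a b) (hne : a ≠ b) :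
    ∃ w, G.Adj a w ∧ G.dist w b < G.dist a b := by
  obtain ⟨p, hp⟩ := h.exists_walk_length_eq_dist
  cases p with
  | nil => exact absurd rfl hne
  | cons haw q => exact ⟨_, haw, (SimpleGraph.dist_le q).trans_lt (by simp [← hp])⟩

theorem isCompleteMultipartite_of_z1Free (hconn : G.Connected)
    (hz1 : ¬ContainsInduced Z1Graph G) (htri : ∀ u, G.InTriangle u) :
    G.IsCompleteMultipartite := by
  suffices h : ∀ n b a c, G.dist b a = n → ¬G.IsPathGraph3Compl b a c by
    by_contra hcm
    obtain ⟨b, a, c, hP⟩ := G.exists_isPathGraph3Compl_of_not_isCompleteMultipartite hcm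
    exact h _ b a c rfl hP
  intro n
  induction n using Nat.strong_induction_on with
  | _ n ih =>
  rintro b a c rfl hP
  obtain ⟨e, hae, hce⟩ := exists_adj_adj_of_inTriangle hz1 (htri a) hP.adj
  have hbe : ¬G.Adj b e := fun hbe => hz1 (containsInduced_z1Graph hP.adj hae hce hbe.symm
    (hP.not_adj_fst ·.symm) (hP.not_adj_snd ·.symm))
  obtain ⟨w, haw, hw⟩ := (hconn a b).exists_adj_dist_lt hP.ne_fst.symm
  -- `w` closes a triangle with `a` and one of `c`, `e`, none of which `b` sees; so either
  -- `b ~ w` gives a `Z₁`, or `(b, w, a)` is a configuration closer to `b`.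
  obtain ⟨t, hat, htw, hbt⟩ : ∃ t, G.Adj a t ∧ G.Adj t w ∧ ¬G.Adj b t := by
    rcases adj_or_adj_of_z1Free_s11 hz1 hce hP.adj hae haw with hwc | hwe
    exacts [⟨c, hP.adj, hwc.symm, hP.not_adj_snd⟩, ⟨e, hae, hwe.symm, hbe⟩]
  by_cases hbw : G.Adj b w
  · exact hz1 (containsInduced_z1Graph hat haw htw hbw.symm (hP.not_adj_fst ·.symm) (hbt ·.symm))
  · rw [G.dist_comm, G.dist_comm (u := a)] at hw
    exact ih _ hw b w a rfl ⟨haw.symm, hbw, hP.not_adj_fst⟩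

theorem SimpleGraph.IsCompleteMultipartite.connected_induce (hcm : G.IsCompleteMultipartite)
    {s : Set V} (hne : s.Nonempty) (hadj : ∀ x ∈ s, ∃ z ∈ s, G.Adj x z) :
    (G.induce s).Connected := by
  refine (SimpleGraph.connected_iff _).2 ⟨fun ⟨x, hx⟩ ⟨y, hy⟩ => ?_, hne.to_subtype⟩
  by_cases hxy : G.Adj x y
  · exact SimpleGraph.Adj.reachable (by simpa using hxy)
  obtain ⟨z, hz, hxz⟩ := hadj x hx
  have hzy : G.Adj z y := by
    by_contra hzy
    exact hcm.trans z y x hzy (hxy ·.symm) hxz.symm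
  exact (SimpleGraph.Adj.reachable (v := ⟨z, hz⟩) (by simpa using hxz)).trans
    (SimpleGraph.Adj.reachable (by simpa using hzy))

theorem exists_adj_mem_of_le_card {r : ℕ} (hcm : G.IsCompleteMultipartite)
    (hstar : ¬ContainsInduced (starGraph r) G) {x w : V} (hxw : G.Adj x w) {t : Finset V}
    (ht : r ≤ t.card) : ∃ z ∈ t, G.Adj x z := by
  by_contra! hno
  refine hstar (containsInduced_starGraph_s11 (z := w) ht (fun z hz => ?_) fun z₁ hz₁ z₂ hz₂ _ => ?_)
  · by_contra hwz
    exact hcm.trans w z x hwz (hno z hz ·.symm) hxw.symm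
  · exact hcm.trans z₁ x z₂ (hno z₁ hz₁ ·.symm) (hno z₂ hz₂)

end

/-- A connected `{K_{1,r}, Z₁}`-free graph (r >= 3) on n vertices with a vertex
of degree at least  is -connected. -/
theorem z1_star_free_connectivity {V : Type*} [Fintype V] (G : SimpleGraph V) (r : ℕ)
    (hr : 3 ≤ r)
    (hconn : G.Connected)
    (hz1 : ¬ContainsInduced Z1Graph G)
    (hstar : ¬ContainsInduced (starGraph r) G)
    (hdeg : ∃ v : V, r ≤ (G.neighborSet v).ncard) :
    IsKConnected G (Fintype.card V - r + 1) := by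
  classical
  obtain ⟨v, hv⟩ := hdeg
  have htri := hconn.inTriangle hz1 (inTriangle_of_le_ncard_neighborSet hstar hv)
  have hcm := isCompleteMultipartite_of_z1Free hconn hz1 htri
  have hrV : r < Fintype.card V := by
    rw [← Nat.card_eq_fintype_card]
    exact hv.trans_lt (Set.ncard_lt_card (G.neighborSet_ne_univ v))
  refine ⟨by omega, fun S hS => ?_⟩
  have hSc : r ≤ Sᶜ.card := by rw [Finset.card_compl]; omega
  refine hcm.connected_induce ?_ fun x _ => ?_
  · obtain ⟨z, hz⟩ := Finset.card_pos.1 (by omega : 0 < Sᶜ.card)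
    exact ⟨z, by simpa using hz⟩
  · obtain ⟨w, -, hxw, -⟩ := htri x
    obtain ⟨z, hz, hxz⟩ := exists_adj_mem_of_le_card hcm hstar hxw hSc
    exact ⟨z, by simpa using hz, hxz⟩
end

section
/- Every 4-connected graph on at least 9 vertices that is both K_{1,4}-free and Z₁-free contains the square of a Hamiltonian cycle. -/
open Finset

theorem IsKConnected.connected {V : Type*} [Fintype V] {G : SimpleGraph V} {k : ℕ}
    (h : IsKConnected G k) (hk : 0 < k) : G.Connected := by
  have := h.2 ∅ (by simpa)
  rw [Finset.coe_empty, Set.compl_empty] at this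
  exact G.induceUnivIso.connected_iff.1 this

theorem IsKConnected.le_degree {V : Type*} [Fintype V] {G : SimpleGraph V} [DecidableRel G.Adj]
    {k : ℕ} (h : IsKConnected G k) (v : V) : k ≤ G.degree v := by
  classical
  by_contra! hlt
  have hconn := h.2 (G.neighborFinset v) (by rwa [G.card_neighborFinset_eq_degree])
  obtain ⟨w, -, hw⟩ := Finset.exists_mem_notMem_of_card_lt_card
    (s := insert v (G.neighborFinset v)) (t := Finset.univ) <| by
      have := Finset.card_insert_le v (G.neighborFinset v)
      rw [G.card_neighborFinset_eq_degree] at this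
      rw [Finset.card_univ]
      have := h.1
      omega
  rw [Finset.mem_insert, not_or] at hw
  have hv : v ∈ ((G.neighborFinset v : Set V))ᶜ := by simp
  have hw' : w ∈ ((G.neighborFinset v : Set V))ᶜ := by simpa using hw.2
  have : Nontrivial ↥((G.neighborFinset v : Set V)ᶜ) :=
    ⟨⟨v, hv⟩, ⟨w, hw'⟩, by simpa using Ne.symm hw.1⟩
  obtain ⟨u, hu⟩ := hconn.preconnected.exists_adj_of_nontrivial ⟨v, hv⟩
  exact u.2 (by simpa using hu)

theorem card_lt_of_isIndepSet_of_forall_adj {V : Type*} {G : SimpleGraph V} {r : ℕ}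
    (hstar : ¬ContainsInduced (starGraph r) G) {v : V} {s : Finset V} (hs : G.IsIndepSet s)
    (hv : ∀ x ∈ s, G.Adj v x) : #s < r := by
  by_contra! hr
  obtain ⟨t, hts, rfl⟩ := Finset.exists_subset_card_eq hr
  let e : Fin #t → V := fun i => t.equivFin.symm i
  have he : Function.Injective e := Subtype.val_injective.comp t.equivFin.symm.injective
  have hve : ∀ i, G.Adj v (e i) := fun i => hv _ (hts (t.equivFin.symm i).2)
  refine hstar ⟨⟨Fin.cons v e, Fin.cons_injective_iff.2 ⟨?_, he⟩⟩, fun a b => ?_⟩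
  · rintro ⟨i, hi⟩
    exact (hve i).ne hi.symm
  · cases a using Fin.cases <;> cases b using Fin.cases
    · simp [starGraph]
    · simp [starGraph, (Fin.succ_ne_zero _).symm, hve]
    · simp [starGraph, Fin.succ_ne_zero, (hve _).symm]
    · rename_i i j
      simp only [starGraph, SimpleGraph.fromRel_adj, Fin.succ_ne_zero, or_self,
        and_false, false_iff]
      by_cases hij : e i = e j
      · simp [hij]
      · exact hs (hts (t.equivFin.symm i).2) (hts (t.equivFin.symm j).2) hij

theorem not_cliqueFree_three_of_four_le_degree {V : Type*} [Fintype V] {G : SimpleGraph V}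
    [DecidableRel G.Adj] (hstar : ¬ContainsInduced (starGraph 4) G) {v : V}
    (hv : 4 ≤ G.degree v) : ¬G.CliqueFree 3 := by
  classical
  have hN : ¬G.IsIndepSet (G.neighborFinset v) := fun h => by
    have := card_lt_of_isIndepSet_of_forall_adj hstar h fun x hx => (G.mem_neighborFinset v x).1 hx
    rw [G.card_neighborFinset_eq_degree] at this
    omega
  obtain ⟨a, ha, b, hb, -, hab⟩ : ∃ a ∈ G.neighborFinset v, ∃ b ∈ G.neighborFinset v,
      a ≠ b ∧ G.Adj a b := by
    simpa [SimpleGraph.IsIndepSet, Set.Pairwise] using hN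
  rw [SimpleGraph.mem_neighborFinset] at ha hb
  exact fun h => h {v, a, b} (SimpleGraph.is3Clique_triple_iff.2 ⟨ha, hb, hab⟩)

theorem card_fiber_le_three {V α : Type*} [Fintype V] [DecidableEq α] {G : SimpleGraph V}
    (hstar : ¬ContainsInduced (starGraph 4) G) {f : V → α} (hf : ∀ x y, G.Adj x y ↔ f x ≠ f y)
    {x y : V} (hxy : G.Adj x y) (a : α) : #{v | f v = a} ≤ 3 := by
  obtain ⟨w, hw⟩ : ∃ w, f w ≠ a := by
    by_contra! h
    exact (hf x y).1 hxy ((h x).trans (h y).symm)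
  have := card_lt_of_isIndepSet_of_forall_adj hstar (v := w) (s := {v | f v = a})
    (fun u hu u' hu' _ => by simp_all) (fun u hu => (hf w u).2 (by simp_all))
  omega

theorem adj_or_adj_of_not_containsInduced_z1 {V : Type*} {G : SimpleGraph V}
    (hz1 : ¬ContainsInduced Z1Graph G) {a b c d : V} (hab : G.Adj a b) (hac : G.Adj a c)
    (hbc : G.Adj b c) (hcd : G.Adj c d) (hda : d ≠ a) (hdb : d ≠ b) : G.Adj a d ∨ G.Adj b d := by
  by_contra! h
  have hinj : Function.Injective ![a, b, c, d] := by
    have := hab.ne; have := hac.ne; have := hbc.ne; have := hcd.ne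
    intro i j hij
    fin_cases i <;> fin_cases j <;> simp_all
  refine hz1 ⟨⟨_, hinj⟩, fun i j => ?_⟩
  fin_cases i <;> fin_cases j <;> simp [Z1Graph, SimpleGraph.adj_comm, hab, hac, hbc, hcd, h]

theorem SimpleGraph.Reachable.mem_of_adj_closed {V : Type*} {G : SimpleGraph V} {s : Set V}
    (hs : ∀ x y, G.Adj x y → x ∈ s → y ∈ s) {x y : V} (hxy : G.Reachable x y) (hx : x ∈ s) :
    y ∈ s := by
  rw [SimpleGraph.reachable_eq_reflTransGen] at hxy
  induction hxy with
  | refl => exact hx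
  | tail _ hyz ih => exact hs _ _ hyz ih

section PawFree

variable {V : Type*} {G : SimpleGraph V} {T : Finset V}

theorem eq_of_not_adj_of_not_adj (hz1 : ¬ContainsInduced Z1Graph G) (hT : G.IsClique (T : Set V))
    {x t₁ t₂ : V} (hx : ∃ t ∈ T, G.Adj x t) (h₁ : t₁ ∈ T) (h₂ : t₂ ∈ T)
    (hx₁ : ¬G.Adj x t₁) (hx₂ : ¬G.Adj x t₂) : t₁ = t₂ := by
  by_contra hne
  obtain ⟨t₀, h₀, hx₀⟩ := hx
  have hxt₁ : x ≠ t₁ := by rintro rfl; exact hx₂ (hT h₁ h₂ hne)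
  have hxt₂ : x ≠ t₂ := by rintro rfl; exact hx₁ (hT h₂ h₁ (Ne.symm hne))
  have h₁₀ : t₁ ≠ t₀ := by rintro rfl; exact hx₁ hx₀
  have h₂₀ : t₂ ≠ t₀ := by rintro rfl; exact hx₂ hx₀
  rcases adj_or_adj_of_not_containsInduced_z1 hz1 (hT h₁ h₂ hne) (hT h₁ h₀ h₁₀) (hT h₂ h₀ h₂₀)
    hx₀.symm hxt₁ hxt₂ with h | h
  exacts [hx₁ h.symm, hx₂ h.symm]

theorem exists_adj_mem_of_adj (hz1 : ¬ContainsInduced Z1Graph G) (hT : G.IsClique (T : Set V))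
    (hT3 : 3 ≤ #T) {x y : V} (hx : ∃ t ∈ T, G.Adj x t) (hxy : G.Adj x y) :
    ∃ t ∈ T, G.Adj y t := by
  classical
  have hmiss : #{t ∈ T | ¬G.Adj x t} ≤ 1 := Finset.card_le_one.2 fun a ha b hb => by
    rw [Finset.mem_filter] at ha hb
    exact eq_of_not_adj_of_not_adj hz1 hT hx ha.1 hb.1 ha.2 hb.2
  have := Finset.card_filter_add_card_filter_not (s := T) (fun t => G.Adj x t)
  obtain ⟨a, ha, b, hb, hab⟩ := Finset.one_lt_card.1 (show 1 < #{t ∈ T | G.Adj x t} by omega)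
  rw [Finset.mem_filter] at ha hb
  by_cases hya : y = a
  · exact ⟨b, hb.1, hya ▸ hT ha.1 hb.1 hab⟩
  by_cases hyb : y = b
  · exact ⟨a, ha.1, hyb ▸ hT hb.1 ha.1 (Ne.symm hab)⟩
  rcases adj_or_adj_of_not_containsInduced_z1 hz1 (hT ha.1 hb.1 hab) ha.2.symm hb.2.symm hxy
    hya hyb with h | h
  exacts [⟨a, ha.1, h.symm⟩, ⟨b, hb.1, h.symm⟩]

theorem exists_adj_mem_of_connected (hz1 : ¬ContainsInduced Z1Graph G) (hG : G.Connected)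
    (hT : G.IsClique (T : Set V)) (hT3 : 3 ≤ #T) (x : V) : ∃ t ∈ T, G.Adj x t := by
  obtain ⟨t₁, h₁, t₂, h₂, hne⟩ := Finset.one_lt_card.1 (by omega : 1 < #T)
  exact (hG.preconnected t₁ x).mem_of_adj_closed (s := {y | ∃ t ∈ T, G.Adj y t})
    (fun _ _ hyz hy => exists_adj_mem_of_adj hz1 hT hT3 hy hyz) ⟨t₂, h₂, hT h₁ h₂ hne⟩

variable [Finite V]

theorem existsUnique_not_adj (hz1 : ¬ContainsInduced Z1Graph G) (hG : G.Connected)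
    (hT : G.IsMaximumClique T) (hT3 : 3 ≤ #T) (x : V) : ∃! t, t ∈ T ∧ ¬G.Adj x t := by
  classical
  refine existsUnique_of_exists_of_unique ?_ fun t₁ t₂ h₁ h₂ =>
    eq_of_not_adj_of_not_adj hz1 hT.isClique
      (exists_adj_mem_of_connected hz1 hG hT.isClique hT3 x) h₁.1 h₂.1 h₁.2 h₂.2
  by_cases hxT : x ∈ T
  · exact ⟨x, hxT, G.loopless.irrefl x⟩
  by_contra! hall
  have := hT.maximum (insert x T) <| by
    rw [Finset.coe_insert]
    exact SimpleGraph.isClique_insert.2 ⟨hT.isClique, fun t ht _ => hall t ht⟩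
  rw [Finset.card_insert_of_notMem hxT] at this
  omega

theorem adj_iff_ne_of_isMaximumClique (hz1 : ¬ContainsInduced Z1Graph G)
    (hT : G.IsMaximumClique T) (hT3 : 3 ≤ #T) {m : V → V} (hmT : ∀ x, m x ∈ T)
    (hm : ∀ x, ∀ t ∈ T, ¬G.Adj x t ↔ t = m x) (x y : V) : G.Adj x y ↔ m x ≠ m y := by
  classical
  have hadj : ∀ z, ∀ t ∈ T, t ≠ m z → G.Adj z t := fun z t ht hne => by
    by_contra h
    exact hne ((hm z t ht).1 h)
  constructor
  · -- otherwise `x`, `y` and `T \ {m x}` form a larger clique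
    intro hxy hxy'
    set S := T.erase (m x)
    have hxS : ∀ t ∈ S, G.Adj x t := fun t ht => hadj x t (Finset.mem_of_mem_erase ht)
      (Finset.ne_of_mem_erase ht)
    have hyS : ∀ t ∈ S, G.Adj y t := fun t ht => hadj y t (Finset.mem_of_mem_erase ht)
      (hxy' ▸ Finset.ne_of_mem_erase ht)
    have hclique : G.IsClique (insert x (insert y S) : Finset V) := by
      rw [Finset.coe_insert, Finset.coe_insert]
      refine SimpleGraph.isClique_insert.2 ⟨SimpleGraph.isClique_insert.2
        ⟨hT.isClique.subset (by simp [S]), fun t ht _ => hyS t ht⟩, ?_⟩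
      rintro t (rfl | ht) -
      exacts [hxy, hxS t ht]
    have hx : x ∉ insert y S := by
      rw [Finset.mem_insert, not_or]
      exact ⟨hxy.ne, fun h => G.loopless.irrefl x (hxS x h)⟩
    have hy : y ∉ S := fun h => G.loopless.irrefl y (hyS y h)
    have := hT.maximum _ hclique
    rw [Finset.card_insert_of_notMem hx, Finset.card_insert_of_notMem hy,
      Finset.card_erase_of_mem (hmT x)] at this
    omega
  · -- otherwise `x`, `m y`, a third vertex `a` of `T` and `y` induce a `Z₁`
    intro hne
    by_contra hxy
    obtain ⟨a, ha⟩ : ((T.erase (m x)).erase (m y)).Nonempty := by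
      rw [← Finset.card_pos]
      have := Finset.pred_card_le_card_erase (s := T.erase (m x)) (a := m y)
      have := Finset.pred_card_le_card_erase (s := T) (a := m x)
      omega
    simp only [Finset.mem_erase] at ha
    obtain ⟨hay, hax, haT⟩ := ha
    have hx_my : G.Adj x (m y) := hadj x _ (hmT y) (Ne.symm hne)
    have hy_my : ¬G.Adj y (m y) := (hm y _ (hmT y)).2 rfl
    rcases adj_or_adj_of_not_containsInduced_z1 hz1 hx_my (hadj x a haT hax)
      (hT.isClique (hmT y) haT (Ne.symm hay)) (hadj y a haT hay).symm
      (by rintro rfl; exact hne rfl) (fun h => hxy (by rwa [← h] at hx_my)) with h | h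
    exacts [hxy h, hy_my h.symm]

/-- Olariu's theorem for a component containing a triangle: `G` is complete multipartite, with the
fibres of `m` as parts. -/
theorem exists_adj_iff_ne_of_not_containsInduced_z1 (hz1 : ¬ContainsInduced Z1Graph G)
    (hG : G.Connected) (htri : ¬G.CliqueFree 3) : ∃ m : V → V, ∀ x y, G.Adj x y ↔ m x ≠ m y := by
  obtain ⟨T, hT⟩ := G.maximumClique_exists
  have hT3 : 3 ≤ #T := by
    obtain ⟨s, hs⟩ : ∃ s, G.IsNClique 3 s := by simpa [SimpleGraph.CliqueFree] using htri
    exact hs.card_eq ▸ hT.maximum s hs.isClique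
  choose m hm hm_unique using existsUnique_not_adj hz1 hG hT hT3
  refine ⟨m, adj_iff_ne_of_isMaximumClique hz1 hT hT3 (fun x => (hm x).1) fun x t ht => ?_⟩
  exact ⟨fun h => hm_unique x t ⟨ht, h⟩, fun h => h ▸ (hm x).2⟩

end PawFree

/-- In a word of length `n` made of constant blocks of lengths at most 3, arranged by
nondecreasing length, positions `p` and `q` can carry the same letter only if `BlockNear n p q`:
the blocks of length 3 come last, so they start at positions `p` with `3 ∣ n - p`. -/
def BlockNear (n p q : ℕ) : Prop :=
  p ≤ q + 2 ∧ q ≤ p + 2 ∧ (q = p + 2 → 3 ∣ n - p) ∧ (p = q + 2 → 3 ∣ n - q)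

theorem BlockNear.symm {n p q : ℕ} (h : BlockNear n p q) : BlockNear n q p :=
  ⟨h.2.1, h.1, h.2.2.2, h.2.2.1⟩

theorem blockNear_of_getElem?_flatMap {α β : Type*} (f : β → α) (g : α → List β)
    (hg : ∀ a, ∀ x ∈ g a, f x = a) {K : List α} (hK : K.Nodup)
    (h3 : ∀ a ∈ K, (g a).length ≤ 3) (hsort : K.Pairwise fun a b => (g a).length ≤ (g b).length)
    {p q : ℕ} {x y : β} (hpq : p ≤ q) (hx : (K.flatMap g)[p]? = some x)
    (hy : (K.flatMap g)[q]? = some y) (hxy : f x = f y) :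
    BlockNear (K.flatMap g).length p q := by
  induction K generalizing p q with
  | nil => simp at hx
  | cons a K ih =>
    rw [List.nodup_cons] at hK
    rw [List.pairwise_cons] at hsort
    rw [List.flatMap_cons] at hx hy ⊢
    have ha := h3 a List.mem_cons_self
    rw [List.length_append]
    rcases lt_or_ge q (g a).length with hq | hq
    · refine ⟨by omega, by omega, fun hgap => ?_, by omega⟩
      -- a gap of 2 inside the first block forces it, hence every later block, to have length 3
      have hK3 : 3 ∣ (K.flatMap g).length := by
        rw [List.length_flatMap]
        refine List.dvd_sum fun l hl => ?_
        obtain ⟨b, hb, rfl⟩ := List.mem_map.1 hl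
        have := hsort.1 b hb
        have := h3 b (List.mem_cons_of_mem _ hb)
        exact ⟨1, by omega⟩
      omega
    rcases lt_or_ge p (g a).length with hp | hp
    · rw [List.getElem?_append_left hp] at hx
      rw [List.getElem?_append_right hq] at hy
      obtain ⟨b, hb, hyb⟩ := List.mem_flatMap.1 (List.mem_of_getElem? hy)
      rw [hg a x (List.mem_of_getElem? hx), hg b y hyb] at hxy
      exact absurd (hxy ▸ hb) hK.1
    · rw [List.getElem?_append_right hp] at hx
      rw [List.getElem?_append_right hq] at hy
      have := ih hK.2 (fun b hb => h3 b (List.mem_cons_of_mem _ hb)) hsort.2 (by omega) hx hy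
      unfold BlockNear at this ⊢
      omega

theorem exists_equiv_fin_blockNear {V α : Type*} [Fintype V] [DecidableEq α] (f : V → α)
    (hfib : ∀ a, #{v | f v = a} ≤ 3) :
    ∃ s : Fin (Fintype.card V) ≃ V, ∀ p q, f (s p) = f (s q) → BlockNear (Fintype.card V) p q := by
  classical
  let g : α → List V := fun a => ({v | f v = a} : Finset V).toList
  have hg : ∀ a, ∀ v ∈ g a, f v = a := by simp [g]
  let K := (univ.image f).toList.mergeSort fun a b => (g a).length ≤ (g b).length
  have hK : K.Nodup := (List.mergeSort_perm _ _).nodup_iff.2 (Finset.nodup_toList _)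
  have hsort : K.Pairwise fun a b => (g a).length ≤ (g b).length := by
    simpa using List.pairwise_mergeSort (le := fun a b => (g a).length ≤ (g b).length)
      (by simpa using fun _ _ _ => le_trans) (by simpa using fun _ _ => le_total _ _) _
  let L := K.flatMap g
  have hL : L.Nodup := List.nodup_flatMap.2 ⟨fun _ _ => Finset.nodup_toList _,
    hK.imp fun hab => List.disjoint_left.2 fun v hva hvb =>
      hab ((hg _ v hva).symm.trans (hg _ v hvb))⟩
  have hmem : ∀ v, v ∈ L := fun v => List.mem_flatMap.2 ⟨f v, by simp [K], by simp [g]⟩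
  let s := hL.getEquivOfForallMemList L hmem
  have hlen : L.length = Fintype.card V := by simpa using Fintype.card_congr s
  refine ⟨(finCongr hlen.symm).trans s, fun p q hpq => ?_⟩
  wlog h : p ≤ q generalizing p q
  · exact (this q p hpq.symm (le_of_not_ge h)).symm
  have := blockNear_of_getElem?_flatMap f g hg hK (fun a _ => by simpa [g] using hfib a) hsort h
    (List.getElem?_eq_getElem _) (List.getElem?_eq_getElem _) hpq
  rwa [hlen] at this

theorem ZMod.val_add_natCast_eq_or {n : ℕ} [NeZero n] (x : ZMod n) {d : ℕ} (hd : d < n) :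
    (x + d).val = x.val + d ∨ (x + d).val + n = x.val + d := by
  rw [ZMod.val_add, ZMod.val_natCast_of_lt hd]
  have := x.val_lt
  rcases lt_or_ge (x.val + d) n with h | h
  · exact Or.inl (Nat.mod_eq_of_lt h)
  · right
    rw [Nat.mod_eq_sub_mod h, Nat.mod_eq_of_lt (by omega)]
    omega

theorem exists_equiv_zmod_not_blockNear_of_coprime {n : ℕ} (hn : 9 ≤ n) (hcop : Nat.Coprime 3 n) :
    ∃ σ : ZMod n ≃ Fin n, ∀ i, ¬BlockNear n (σ i) (σ (i + 1)) ∧ ¬BlockNear n (σ i) (σ (i + 2)) := by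
  have : NeZero n := ⟨by omega⟩
  have h3 : IsUnit (3 : ZMod n) := by
    simpa using (ZMod.unitOfCoprime 3 hcop).isUnit
  let φ : ZMod n → Fin n := fun i => ⟨(3 * i).val, ZMod.val_lt _⟩
  have hφ : Function.Injective φ := fun i j h =>
    h3.mul_left_cancel (ZMod.val_injective n (Fin.mk.inj_iff.1 h))
  refine ⟨.ofBijective φ ((Fintype.bijective_iff_injective_and_card φ).2 ⟨hφ, by simp⟩),
    fun i => ?_⟩
  have h1 := (3 * i).val_add_natCast_eq_or (d := 3) (by omega)
  have h2 := (3 * i).val_add_natCast_eq_or (d := 6) (by omega)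
  rw [show 3 * i + ((3 : ℕ) : ZMod n) = 3 * (i + 1) by push_cast; ring] at h1
  rw [show 3 * i + ((6 : ℕ) : ZMod n) = 3 * (i + 2) by push_cast; ring] at h2
  have := (3 * i).val_lt
  simp only [Equiv.ofBijective_apply, φ, BlockNear]
  omega

theorem mod_three_mul_cases (p m : ℕ) :
    p % 3 = 0 ∧ p % 3 * m = 0 ∨ p % 3 = 1 ∧ p % 3 * m = m ∨ p % 3 = 2 ∧ p % 3 * m = 2 * m := by
  have := Nat.mod_lt p (show 3 > 0 by norm_num)
  interval_cases p % 3 <;> simp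

/-- Write a word of length `3 * m` row by row into three rows of length `m` and read it column by
column: the `p`-th letter read is letter `columnIndex m p` of the word. -/
def columnIndex (m p : ℕ) : ℕ := p / 3 + p % 3 * m

theorem columnIndex_lt {m p : ℕ} (hp : p < 3 * m) : columnIndex m p < 3 * m := by
  have := mod_three_mul_cases p m
  unfold columnIndex
  omega

theorem columnIndex_injOn (m : ℕ) : Set.InjOn (columnIndex m) (Set.Iio (3 * m)) :=
    fun p hp q hq h => by
  simp only [Set.mem_Iio] at hp hq
  have := mod_three_mul_cases p m
  have := mod_three_mul_cases q m
  unfold columnIndex at h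
  omega

theorem not_blockNear_columnIndex {m p q d : ℕ} (hm : 3 ≤ m) (hp : p < 3 * m) (hq : q < 3 * m)
    (hd : d = 1 ∨ d = 2) (hpq : q = p + d ∨ q + 3 * m = p + d) :
    ¬BlockNear (3 * m) (columnIndex m p) (columnIndex m q) := by
  have := mod_three_mul_cases p m
  have := mod_three_mul_cases q m
  unfold BlockNear columnIndex
  omega

theorem exists_equiv_zmod_not_blockNear_of_three_dvd {n : ℕ} (hn : 9 ≤ n) (h3 : 3 ∣ n) :
    ∃ σ : ZMod n ≃ Fin n, ∀ i, ¬BlockNear n (σ i) (σ (i + 1)) ∧ ¬BlockNear n (σ i) (σ (i + 2)) := by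
  have : NeZero n := ⟨by omega⟩
  obtain ⟨m, rfl⟩ := h3
  let φ : ZMod (3 * m) → Fin (3 * m) := fun i => ⟨columnIndex m i.val, columnIndex_lt i.val_lt⟩
  have hφ : Function.Injective φ := fun i j h =>
    ZMod.val_injective _ (columnIndex_injOn m i.val_lt j.val_lt (Fin.mk.inj_iff.1 h))
  refine ⟨.ofBijective φ ((Fintype.bijective_iff_injective_and_card φ).2 ⟨hφ, by simp⟩),
    fun i => ⟨?_, ?_⟩⟩
  · refine not_blockNear_columnIndex (by omega) i.val_lt (ZMod.val_lt _) (Or.inl rfl) ?_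
    simpa using i.val_add_natCast_eq_or (d := 1) (by omega)
  · refine not_blockNear_columnIndex (by omega) i.val_lt (ZMod.val_lt _) (Or.inr rfl) ?_
    simpa using i.val_add_natCast_eq_or (d := 2) (by omega)

theorem exists_equiv_zmod_not_blockNear {n : ℕ} (hn : 9 ≤ n) :
    ∃ σ : ZMod n ≃ Fin n, ∀ i, ¬BlockNear n (σ i) (σ (i + 1)) ∧ ¬BlockNear n (σ i) (σ (i + 2)) := by
  by_cases h3 : 3 ∣ n
  · exact exists_equiv_zmod_not_blockNear_of_three_dvd hn h3
  · exact exists_equiv_zmod_not_blockNear_of_coprime hn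
      ((Nat.Prime.coprime_iff_not_dvd Nat.prime_three).2 h3)

theorem hasH2_of_ne_imp_adj {V α : Type*} [Fintype V] [DecidableEq α] {G : SimpleGraph V}
    (f : V → α) (hf : ∀ x y, f x ≠ f y → G.Adj x y) (hcard : 9 ≤ Fintype.card V)
    (hfib : ∀ a, #{v | f v = a} ≤ 3) : HasH2 G := by
  obtain ⟨s, hs⟩ := exists_equiv_fin_blockNear f hfib
  obtain ⟨σ, hσ⟩ := exists_equiv_zmod_not_blockNear hcard
  exact ⟨σ.trans s, fun i =>
    ⟨hf _ _ fun h => (hσ i).1 (hs _ _ h), hf _ _ fun h => (hσ i).2 (hs _ _ h)⟩⟩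

/-- Every 4-connected `{K_{1,4}, Z₁}`-free graph on at least 9 vertices contains
the square of a Hamiltonian cycle. -/
theorem fourConnected_k14_z1_free_h2 {V : Type*} [Fintype V] (G : SimpleGraph V)
    (hcard : 9 ≤ Fintype.card V)
    (h4 : IsKConnected G 4)
    (hstar : ¬ContainsInduced (starGraph 4) G)
    (hz1 : ¬ContainsInduced Z1Graph G) :
    HasH2 G := by
  classical
  obtain ⟨v⟩ : Nonempty V := Fintype.card_pos_iff.1 (by omega)
  have hdeg : 4 ≤ G.degree v := h4.le_degree v
  obtain ⟨m, hm⟩ := exists_adj_iff_ne_of_not_containsInduced_z1 hz1 (h4.connected (by norm_num))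
    (not_cliqueFree_three_of_four_le_degree hstar hdeg)
  obtain ⟨w, hvw⟩ := (G.degree_pos_iff_exists_adj v).1 (by omega)
  exact hasH2_of_ne_imp_adj m (fun x y => (hm x y).2) hcard (card_fiber_le_three hstar hm hvw)
end

section
/- The complete tripartite graph K_{2,3,3} is 4-connected, K_{1,4}-free, Z₁-free, but contains no square of a Hamiltonian cycle. -/
/-- The complete tripartite graph K_{2,3,3}. -/
def k233 : SimpleGraph (Σ i : Fin 3, Fin (![2, 3, 3] i)) :=
  SimpleGraph.completeMultipartiteGraph (fun i : Fin 3 => Fin (![2, 3, 3] i))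


open Finset

lemma isKConnected_of_le_card_commonNeighbors {V : Type*} [Fintype V] [DecidableEq V]
    {G : SimpleGraph V} [DecidableRel G.Adj] {k : ℕ} (hk : k < Fintype.card V)
    (h : ∀ u v, u ≠ v → ¬G.Adj u v → k ≤ #(G.neighborFinset u ∩ G.neighborFinset v)) :
    IsKConnected G k := by
  refine ⟨hk, fun S hS => ?_⟩
  obtain ⟨x, hx⟩ : Sᶜ.Nonempty := by rw [← card_pos, card_compl]; omega
  refine (SimpleGraph.connected_iff _).2 ⟨?_, ⟨⟨x, by simpa using hx⟩⟩⟩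
  rintro ⟨u, hu⟩ ⟨v, hv⟩
  by_cases huv : u = v
  · subst huv; rfl
  by_cases hadj : G.Adj u v
  · exact SimpleGraph.Adj.reachable (G := G.induce _) hadj
  obtain ⟨w, hw, hwS⟩ := exists_mem_notMem_of_card_lt_card (hS.trans_le (h u v huv hadj))
  rw [mem_inter, SimpleGraph.mem_neighborFinset, SimpleGraph.mem_neighborFinset] at hw
  let w' : ((S : Set V)ᶜ : Set V) := ⟨w, by simpa using hwS⟩
  exact (SimpleGraph.Adj.reachable (v := w') hw.1).trans
    (SimpleGraph.Adj.reachable (u := w') hw.2.symm)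

lemma ContainsInduced.isCompleteMultipartite {W V : Type*} {F : SimpleGraph W}
    {G : SimpleGraph V} (hF : ContainsInduced F G) (hG : G.IsCompleteMultipartite) :
    F.IsCompleteMultipartite := by
  obtain ⟨f, hf⟩ := hF
  exact hG.comap ⟨f, (hf _ _).symm⟩

lemma not_isCompleteMultipartite_z1Graph : ¬Z1Graph.IsCompleteMultipartite := fun h =>
  h.trans 0 3 1 (by simp [Z1Graph]) (by simp [Z1Graph]) (by simp [Z1Graph])

lemma ContainsInduced.exists_isNIndepSet_of_starGraph {V : Type*} {G : SimpleGraph V} {r : ℕ}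
    (h : ContainsInduced (starGraph r) G) : ∃ s, G.IsNIndepSet r s := by
  obtain ⟨f, hf⟩ := h
  refine ⟨univ.map ((Fin.succEmb r).trans f), ?_, by simp⟩
  simp only [coe_map, coe_univ, Set.image_univ]
  rintro _ ⟨a, rfl⟩ _ ⟨b, rfl⟩ hab
  simp only [Function.Embedding.trans_apply, Fin.coe_succEmb] at hab ⊢
  rw [← hf]
  simp [starGraph, Fin.succ_ne_zero]

lemma SimpleGraph.completeMultipartiteGraph.card_le_of_isIndepSet {ι : Type*}
    {V : ι → Type*} [∀ i, Fintype (V i)] {s : Finset (Σ i, V i)}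
    (hs : (completeMultipartiteGraph V).IsIndepSet s) {x : Σ i, V i} (hx : x ∈ s) :
    #s ≤ Fintype.card (V x.1) := by
  calc #s ≤ #(univ.map (Function.Embedding.sigmaMk (β := V) x.1)) := card_le_card ?_
    _ = Fintype.card (V x.1) := by simp
  intro y hy
  have hyx : y.1 = x.1 := by
    by_cases h : y = x
    · rw [h]
    · simpa using hs hy hx h
  obtain ⟨j, b⟩ := y
  dsimp only at hyx
  subst hyx
  simp

lemma periodic_three_of_ne {R : Type*} [AddMonoidWithOne R] {c : R → Fin 3}
    (h1 : ∀ i, c i ≠ c (i + 1)) (h2 : ∀ i, c i ≠ c (i + 2)) : Function.Periodic c 3 := by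
  intro i
  have fin3 : ∀ a b c d : Fin 3, a ≠ b → a ≠ c → b ≠ c → b ≠ d → c ≠ d → d = a := by omega
  have e2 : i + 1 + 1 = i + 2 := by rw [add_assoc, one_add_one_eq_two]
  have e3 : i + 1 + 2 = i + 3 := by rw [add_assoc]; norm_num
  have e3' : i + 2 + 1 = i + 3 := by rw [add_assoc]; norm_num
  refine fin3 _ _ _ _ (h1 i) (h2 i) ?_ ?_ ?_
  · simpa [e2] using h1 (i + 1)
  · simpa [e3] using h2 (i + 1)
  · simpa [e3'] using h1 (i + 2)

lemma HasH2.three_dvd_card {V : Type*} [Fintype V] {G : SimpleGraph V} (hG : G.Colorable 3)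
    (h : HasH2 G) : 3 ∣ Fintype.card V := by
  obtain ⟨C⟩ := hG
  obtain ⟨e, he⟩ := h
  by_contra h3
  have hc : Function.Periodic (C ∘ e) 3 :=
    periodic_three_of_ne (fun i => C.valid (he i).1) (fun i => C.valid (he i).2)
  obtain ⟨k, hk⟩ := ZMod.intCast_surjective (3 : ZMod (Fintype.card V))⁻¹
  have h_one : (k : ZMod (Fintype.card V)) * 3 = 1 := by
    rw [hk, mul_comm]
    exact_mod_cast ZMod.coe_mul_inv_eq_one 3 ((Nat.prime_three.coprime_iff_not_dvd).2 h3)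
  have h_const := hc.int_mul k 0
  rw [h_one] at h_const
  exact C.valid (he 0).1 h_const.symm

/-- K_{2,3,3} is 4-connected, K_{1,4}-free and Z1-free, but has no
Hamiltonian square. -/
theorem k233_properties :
    IsKConnected k233 4 ∧ ¬ContainsInduced (starGraph 4) k233 ∧
      ¬ContainsInduced Z1Graph k233 ∧ ¬HasH2 k233 := by
  let _ : DecidableRel k233.Adj := fun u v => inferInstanceAs (Decidable (u.1 ≠ v.1))
  refine ⟨isKConnected_of_le_card_commonNeighbors (by decide) (by decide), fun h => ?_,
    fun h => not_isCompleteMultipartite_z1Graph (h.isCompleteMultipartite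
      (SimpleGraph.completeMultipartiteGraph.isCompleteMultipartite _)),
    fun h => absurd (h.three_dvd_card (SimpleGraph.completeMultipartiteGraph.colorable _))
      (by decide)⟩
  obtain ⟨s, hs⟩ := h.exists_isNIndepSet_of_starGraph
  obtain ⟨x, hx⟩ : s.Nonempty := by rw [← card_pos, hs.card_eq]; norm_num
  have h_part : ∀ i : Fin 3, Fintype.card (Fin (![2, 3, 3] i)) ≤ 3 := by decide
  have h_four := SimpleGraph.completeMultipartiteGraph.card_le_of_isIndepSet hs.isIndepSet hx
  rw [hs.card_eq] at h_four
  exact absurd (h_four.trans (h_part x.1)) (by norm_num)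
end

section
/- If a complete multipartite graph with all parts of size at most 2 (i.e., a complete graph minus a matching) is 4-connected, then it contains the square of a Hamiltonian cycle. -/
/-! Each vertex has at most one non-neighbour besides itself, so `G` is complete except between
the pairs of an involution `p` of `V`. If `p v ≠ v`, deleting all other vertices leaves the
non-adjacent pair `{v, p v}`, so 4-connectivity gives at least six vertices. On `ZMod n`, the
involution swapping `j` with `j + n / 2` for `j < m` never sends `x` to `x + 1` or `x + 2` once
`n ≥ 6`, since then `n / 2 ≥ 3` and `n - n / 2 ≥ 3`. Choosing `m` as the number of pairs of `p`,
it is conjugate to `p` (involutions are determined up to conjugacy by how many points they move),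
and the conjugating bijection `ZMod n ≃ V` keeps partners at cyclic distance at least 3. -/

open Finset Equiv

def halfShiftPairing (n m j : ℕ) : ℕ :=
  if j < m then j + n / 2 else if n / 2 ≤ j ∧ j < n / 2 + m then j - n / 2 else j

namespace halfShiftPairing

variable {n m : ℕ}

theorem lt (hm : 2 * m ≤ n) {j : ℕ} (hj : j < n) : halfShiftPairing n m j < n := by
  unfold halfShiftPairing; split_ifs <;> omega

theorem involutive (hm : 2 * m ≤ n) : Function.Involutive (halfShiftPairing n m) := by
  intro j; unfold halfShiftPairing; split_ifs <;> omega

theorem ne_add_mod (h3 : 3 ≤ n) (h6 : 0 < m → 6 ≤ n) {j : ℕ} (hj : j < n) :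
    halfShiftPairing n m j ≠ (j + 1) % n ∧ halfShiftPairing n m j ≠ (j + 2) % n := by
  rw [Nat.add_mod_eq_ite, Nat.add_mod_eq_ite, Nat.mod_eq_of_lt hj,
    Nat.mod_eq_of_lt (by omega : 1 < n), Nat.mod_eq_of_lt (by omega : 2 < n)]
  unfold halfShiftPairing; split_ifs <;> omega

theorem card_filter_ne_self (hm : 2 * m ≤ n) :
    #{j ∈ range n | halfShiftPairing n m j ≠ j} = 2 * m := by
  have hsplit :
      {j ∈ range n | halfShiftPairing n m j ≠ j} = range m ∪ Ico (n / 2) (n / 2 + m) := by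
    ext j; simp only [mem_filter, mem_range, mem_union, mem_Ico]; unfold halfShiftPairing
    split_ifs <;> omega
  rw [hsplit, card_union_of_disjoint, card_range, Nat.card_Ico]
  · omega
  · exact disjoint_left.2 fun j hj hj' => by simp only [mem_range, mem_Ico] at hj hj'; omega

end halfShiftPairing

theorem ZMod.card_filter_val {n : ℕ} [NeZero n] (P : ℕ → Prop) [DecidablePred P] :
    #{x : ZMod n | P x.val} = #{j ∈ range n | P j} := by
  rw [← card_image_of_injective _ (ZMod.val_injective n)]
  congr 1
  ext j
  simp only [mem_image, mem_filter, mem_univ, true_and, mem_range]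
  constructor
  · rintro ⟨x, hx, rfl⟩
    exact ⟨x.val_lt, hx⟩
  · rintro ⟨hj, hP⟩
    exact ⟨j, by rwa [ZMod.val_cast_of_lt hj], ZMod.val_cast_of_lt hj⟩

theorem ZMod.val_add_natCast_of_lt {n d : ℕ} [NeZero n] (x : ZMod n) (hd : d < n) :
    (x + d).val = (x.val + d) % n := by
  rw [ZMod.val_add, ZMod.val_cast_of_lt hd]

theorem ZMod.exists_involution_avoiding_add_one_add_two (n m : ℕ) [NeZero n] (h3 : 3 ≤ n)
    (hm : 2 * m ≤ n) (h6 : 0 < m → 6 ≤ n) :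
    ∃ σ : Perm (ZMod n), σ ^ 2 = 1 ∧ #σ.support = 2 * m ∧
      ∀ x, σ x ≠ x + 1 ∧ σ x ≠ x + 2 := by
  set f : ZMod n → ZMod n := fun x => (halfShiftPairing n m x.val : ZMod n)
  have hval (x : ZMod n) : (f x).val = halfShiftPairing n m x.val :=
    ZMod.val_cast_of_lt (halfShiftPairing.lt hm x.val_lt)
  have hf : Function.Involutive f := fun x =>
    ZMod.val_injective n (by rw [hval, hval, halfShiftPairing.involutive hm])
  refine ⟨hf.toPerm, ?_, ?_, fun x => ?_⟩
  · ext x; simp [sq, hf x]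
  · calc #hf.toPerm.support = #{x : ZMod n | halfShiftPairing n m x.val ≠ x.val} := by
          congr 1; ext x
          rw [Perm.mem_support, mem_filter, ← hval, (ZMod.val_injective n).ne_iff]
          simp
      _ = 2 * m := (ZMod.card_filter_val (fun j => halfShiftPairing n m j ≠ j)).trans
          (halfShiftPairing.card_filter_ne_self hm)
  · obtain ⟨h1, h2⟩ := halfShiftPairing.ne_add_mod h3 h6 x.val_lt
    have e1 := x.val_add_natCast_of_lt (d := 1) (by omega)
    have e2 := x.val_add_natCast_of_lt (d := 2) (by omega)
    rw [Nat.cast_one] at e1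
    rw [Nat.cast_ofNat] at e2
    simp only [Function.Involutive.coe_toPerm]
    constructor
    · exact fun h => h1 (by rw [← e1, ← h, hval])
    · exact fun h => h2 (by rw [← e2, ← h, hval])


theorem Equiv.Perm.isConj_of_sq_eq_one {α : Type*} [Fintype α] [DecidableEq α] {σ τ : Perm α}
    (hσ : σ ^ 2 = 1) (hτ : τ ^ 2 = 1) (h : #σ.support = #τ.support) : IsConj σ τ := by
  rw [Perm.isConj_iff_cycleType_eq, Perm.cycleType_of_pow_prime_eq_one hσ,
    Perm.cycleType_of_pow_prime_eq_one hτ]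
  have hsum (π : Perm α) (hπ : π ^ 2 = 1) : #π.support = π.cycleType.card * 2 := by
    rw [← π.sum_cycleType, Perm.cycleType_of_pow_prime_eq_one hπ, Multiset.sum_replicate,
      Multiset.card_replicate, smul_eq_mul]
  congr 1
  exact Nat.eq_of_mul_eq_mul_right two_pos (by rw [← hsum σ hσ, ← hsum τ hτ, h])

theorem Equiv.Perm.exists_zmod_equiv_avoiding_add_one_add_two {V : Type*} [Fintype V]
    {p : Perm V} (hp : p ^ 2 = 1) (h3 : 3 ≤ Fintype.card V) (h6 : ∀ v, p v ≠ v → 6 ≤ Fintype.card V) :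
    ∃ e : ZMod (Fintype.card V) ≃ V, ∀ i, p (e i) ≠ e (i + 1) ∧ p (e i) ≠ e (i + 2) := by
  set n := Fintype.card V
  have : NeZero n := ⟨by omega⟩
  set e₀ : ZMod n ≃ V := Fintype.equivOfCardEq (ZMod.card n)
  set p' : Perm (ZMod n) := e₀.symm.permCongr p
  have hp' : p' ^ 2 = 1 := by
    have hpp (v : V) : p (p v) = v := by rw [← Perm.mul_apply, ← sq, hp, Perm.one_apply]
    ext x; simp [p', sq, permCongr_apply, hpp]
  have hm : 2 * (#p'.support / 2) = #p'.support :=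
    Nat.mul_div_cancel' (Perm.two_dvd_card_support hp')
  obtain ⟨σ, hσ, hσcard, hσne⟩ :=
    ZMod.exists_involution_avoiding_add_one_add_two n (#p'.support / 2) h3
      (by rw [hm]; exact (card_le_univ _).trans_eq (ZMod.card n)) fun hpos => by
        obtain ⟨x, hx⟩ := card_pos.1 (by omega : 0 < #p'.support)
        exact h6 (e₀ x) fun h => Perm.mem_support.1 hx (by simp [p', permCongr_apply, h])
  obtain ⟨c, hc⟩ := isConj_iff.1 (Perm.isConj_of_sq_eq_one hp' hσ (by rw [hσcard, hm]))
  refine ⟨c.symm.trans e₀, fun i => ?_⟩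
  have hconj : p (e₀ (c.symm i)) = e₀ (c.symm (σ i)) := by
    rw [← hc]; simp [p', permCongr_apply]
  simp only [Equiv.trans_apply, hconj, e₀.injective.ne_iff, c.symm.injective.ne_iff]
  exact hσne i

namespace SimpleGraph

variable {V : Type*} (G : SimpleGraph V)

theorem eq_of_not_adj_of_not_adj [Finite V] (hG : ∀ v, {w | ¬G.Adj v w}.ncard ≤ 2) {v w₁ w₂ : V}
    (h₁ : w₁ ≠ v) (h₂ : w₂ ≠ v) (hw₁ : ¬G.Adj v w₁) (hw₂ : ¬G.Adj v w₂) : w₁ = w₂ := by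
  by_contra hne
  have hsub : {v, w₁, w₂} ⊆ {w | ¬G.Adj v w} := by
    rintro x (rfl | rfl | rfl)
    exacts [G.irrefl, hw₁, hw₂]
  have h3 : ({v, w₁, w₂} : Set V).ncard = 3 :=
    Set.ncard_eq_three.2 ⟨v, w₁, w₂, h₁.symm, h₂.symm, hne, rfl⟩
  have := Set.ncard_le_ncard hsub (Set.toFinite _)
  linarith [hG v]

theorem exists_perm_sq_eq_one_adj_iff [Finite V] (hG : ∀ v, {w | ¬G.Adj v w}.ncard ≤ 2) :
    ∃ p : Perm V, p ^ 2 = 1 ∧ ∀ v w, G.Adj v w ↔ v ≠ w ∧ w ≠ p v := by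
  have hpartner (v : V) : ∃ u, ∀ w, ¬G.Adj v w ↔ w = v ∨ w = u := by
    by_cases h : ∃ u ≠ v, ¬G.Adj v u
    · obtain ⟨u, huv, hu⟩ := h
      refine ⟨u, fun w => ⟨fun hw => ?_, ?_⟩⟩
      · by_cases hwv : w = v
        exacts [.inl hwv, .inr (G.eq_of_not_adj_of_not_adj hG hwv huv hw hu)]
      · rintro (rfl | rfl)
        exacts [G.irrefl, hu]
    · push Not at h
      exact ⟨v, fun w => ⟨fun hw => .inl (by_contra fun hwv => hw (h w hwv)), by
        rintro (rfl | rfl) <;> exact G.irrefl⟩⟩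
  choose q hq using hpartner
  have hq_inv : Function.Involutive q := fun v => by
    have hqv : ¬G.Adj (q v) v := fun h => (hq v (q v)).2 (.inr rfl) h.symm
    rcases (hq (q v) v).1 hqv with h | h
    · rw [← h]; exact h.symm
    · exact h.symm
  refine ⟨hq_inv.toPerm, ?_, fun v w => ?_⟩
  · ext v; simp [sq, hq_inv v]
  · rw [← not_iff_not, hq, Function.Involutive.coe_toPerm]
    tauto

theorem Connected.adj_of_induce_pair {G : SimpleGraph V} {u v : V}
    (h : (G.induce {u, v}).Connected) (huv : u ≠ v) : G.Adj u v := by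
  obtain ⟨w⟩ := h.preconnected ⟨u, by simp⟩ ⟨v, by simp⟩
  cases w with
  | nil => exact absurd rfl huv
  | @cons _ x _ hadj _ =>
    obtain ⟨x, rfl | rfl⟩ := x
    exacts [absurd hadj (G.induce _).irrefl, hadj]

theorem add_two_le_card_of_not_adj [Fintype V] {k : ℕ}
    (hconn : ∀ S : Finset V, #S < k → (G.induce (S : Set V)ᶜ).Connected) {u v : V} (huv : u ≠ v)
    (h : ¬G.Adj u v) : k + 2 ≤ Fintype.card V := by
  classical
  by_contra! hk
  have hS : #({u, v} : Finset V)ᶜ < k := by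
    have := card_le_univ ({u, v} : Finset V)
    rw [card_pair huv] at this
    rw [card_compl, card_pair huv]; omega
  have := hconn _ hS
  rw [coe_compl, compl_compl, coe_pair] at this
  exact h (this.adj_of_induce_pair huv)

end SimpleGraph

theorem completeMinusMatching_h2_general {V : Type*} [Fintype V] (G : SimpleGraph V)
    (hparts : ∀ v : V, ({w : V | ¬G.Adj v w}).ncard ≤ 2)
    (h4 : 4 < Fintype.card V ∧
      ∀ S : Finset V, S.card < 4 → (G.induce ((S : Set V)ᶜ)).Connected) :
    HasH2 G := by
  obtain ⟨hcard, hconn⟩ := h4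
  obtain ⟨p, hp, hadj⟩ := G.exists_perm_sq_eq_one_adj_iff hparts
  obtain ⟨e, he⟩ := Perm.exists_zmod_equiv_avoiding_add_one_add_two hp (by omega) fun v hv =>
    G.add_two_le_card_of_not_adj hconn (Ne.symm hv) fun h => ((hadj _ _).1 h).2 rfl
  have : NeZero (Fintype.card V) := ⟨by omega⟩
  have hshift (d : ℕ) (hd : 0 < d) (hdn : d < Fintype.card V) (i : ZMod (Fintype.card V)) :
      e i ≠ e (i + d) := by
    refine e.injective.ne (add_ne_left.2 ?_).symm
    rw [Ne, ZMod.natCast_eq_zero_iff]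
    exact Nat.not_dvd_of_pos_of_lt hd hdn
  refine ⟨e, fun i => ⟨(hadj _ _).2 ⟨?_, (he i).1.symm⟩, (hadj _ _).2 ⟨?_, (he i).2.symm⟩⟩⟩
  · simpa using hshift 1 one_pos (by omega) i
  · simpa using hshift 2 two_pos (by omega) i

/-- A 4-connected complete multipartite graph with all parts of size at most 2
(a complete graph minus a matching) contains the square of a Hamiltonian cycle. -/
theorem completeMinusMatching_h2 {V : Type*} [Fintype V] (G : SimpleGraph V)
    (hcm : IsCompleteMultipartite G)
    (hparts : ∀ v : V, ({w : V | ¬G.Adj v w}).ncard ≤ 2)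
    (h4 : 4 < Fintype.card V ∧
      ∀ S : Finset V, S.card < 4 → (G.induce ((S : Set V)ᶜ)).Connected) :
    HasH2 G :=
  completeMinusMatching_h2_general G hparts h4
end
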